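/- arXiv:2309.00532 — 3 statements merged into one kernel-verified Lean document; each statement's English description precedes it below -/
import Mathlib

section
/- (Soundness of ℓIGL for formulas.) If ℓIGL ⊢ x:A, i.e. there is an ∞-proof in ℓIK4 of the sequent ∅ ⇒ x:A, then birel-IGL ⊨ A, i.e. B, w ⊨ A for every birelational model B with transitive accessibility relation and terminating composite ≤;R^B and every world w of B. -/
namespace IGL

/-- Modal formulas over propositional symbols indexed by naturals. -/
inductive Formula : Type
  | atom : ℕ → Formula
  | bot  : Formula
  | and  : Formula → Formula → Formula
  | or   : Formula → Formula → Formula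
  | imp  : Formula → Formula → Formula
  | box  : Formula → Formula
  | dia  : Formula → Formula

/-- ¬A abbreviates A → ⊥. -/
def Formula.neg (A : Formula) : Formula := Formula.imp A Formula.bot

/-- Löb's axiom □(□A→A)→□A. -/
def lobAx (A : Formula) : Formula :=
  Formula.imp (Formula.box (Formula.imp (Formula.box A) A)) (Formula.box A)

/-- Boolean evaluation of a formula, treating modal (sub)formulas and atoms as
propositional atoms; used to define substitution instances of classical
propositional tautologies. -/
def evalCPL (v : Formula → Bool) : Formula → Bool
  | Formula.atom n  => v (Formula.atom n)
  | Formula.bot     => false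
  | Formula.and A B => evalCPL v A && evalCPL v B
  | Formula.or  A B => evalCPL v A || evalCPL v B
  | Formula.imp A B => !evalCPL v A || evalCPL v B
  | Formula.box A   => v (Formula.box A)
  | Formula.dia A   => v (Formula.dia A)

/-- A (substitution instance of a) theorem of classical propositional logic. -/
def Taut (A : Formula) : Prop := ∀ v, evalCPL v A = true

/-- The modal logic K: classical propositional logic, axiom k, modus ponens, necessitation. -/
inductive KProof : Formula → Prop
  | taut {A : Formula} : Taut A → KProof A
  | axK (A B : Formula) :
      KProof (Formula.imp (Formula.box (Formula.imp A B))
        (Formula.imp (Formula.box A) (Formula.box B)))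
  | mp {A B : Formula} : KProof (Formula.imp A B) → KProof A → KProof B
  | nec {A : Formula} : KProof A → KProof (Formula.box A)

/-- The modal logic K4: K plus axiom 4. -/
inductive K4Proof : Formula → Prop
  | taut {A : Formula} : Taut A → K4Proof A
  | axK (A B : Formula) :
      K4Proof (Formula.imp (Formula.box (Formula.imp A B))
        (Formula.imp (Formula.box A) (Formula.box B)))
  | ax4 (A : Formula) :
      K4Proof (Formula.imp (Formula.box A) (Formula.box (Formula.box A)))
  | mp {A B : Formula} : K4Proof (Formula.imp A B) → K4Proof A → K4Proof B
  | nec {A : Formula} : K4Proof A → K4Proof (Formula.box A)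

/-- Gödel–Löb logic GL: K4 plus Löb's axiom. -/
inductive GLProof : Formula → Prop
  | taut {A : Formula} : Taut A → GLProof A
  | axK (A B : Formula) :
      GLProof (Formula.imp (Formula.box (Formula.imp A B))
        (Formula.imp (Formula.box A) (Formula.box B)))
  | ax4 (A : Formula) :
      GLProof (Formula.imp (Formula.box A) (Formula.box (Formula.box A)))
  | axLob (A : Formula) : GLProof (lobAx A)
  | mp {A B : Formula} : GLProof (Formula.imp A B) → GLProof A → GLProof B
  | nec {A : Formula} : GLProof A → GLProof (Formula.box A)

/-- Classical relational (Kripke) satisfaction. -/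
def sat {W : Type} (R : W → W → Prop) (V : W → ℕ → Prop) : W → Formula → Prop
  | w, Formula.atom n  => V w n
  | _, Formula.bot     => False
  | w, Formula.and A B => sat R V w A ∧ sat R V w B
  | w, Formula.or  A B => sat R V w A ∨ sat R V w B
  | w, Formula.imp A B => sat R V w A → sat R V w B
  | w, Formula.box A   => ∀ v, R w v → sat R V v A
  | w, Formula.dia A   => ∃ v, R w v ∧ sat R V v A

/-- A frame satisfies `A` if every model based on it satisfies `A` at every world. -/
def FrameSat (W : Type) (R : W → W → Prop) (A : Formula) : Prop :=
  ∀ (V : W → ℕ → Prop) (w : W), sat R V w A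

/-- A relation is terminating if it admits no infinite path. -/
def Terminating {α : Type} (r : α → α → Prop) : Prop :=
  ¬ ∃ f : ℕ → α, ∀ n, r (f n) (f (n + 1))

/-! ### Labelled sequents -/

/-- A labelled formula `x : A`. -/
abbrev LFormula := ℕ × Formula

/-- A labelled sequent `R, Γ ⇒ Δ`: a set of relational atoms and two
multisets of labelled formulas. -/
structure Sequent : Type where
  rel : Set (ℕ × ℕ)
  left : Multiset LFormula
  right : Multiset LFormula

/-- Variables occurring in a set of relational atoms. -/
def relVars (R : Set (ℕ × ℕ)) : Set ℕ := {z | ∃ w, (z, w) ∈ R ∨ (w, z) ∈ R}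

/-- Labels occurring in a multiset of labelled formulas. -/
def mLabels (Γ : Multiset LFormula) : Set ℕ := {z | ∃ A, (z, A) ∈ Γ}

/-- The variables/labels occurring in a sequent. -/
def Sequent.vars (S : Sequent) : Set ℕ := relVars S.rel ∪ mLabels S.left ∪ mLabels S.right

/-- `y` is a fresh label for the sequent `S`. -/
def Fresh (y : ℕ) (S : Sequent) : Prop := y ∉ S.vars

/-- A sequent has exactly one formula on the right-hand side. -/
def SingleRHS (S : Sequent) : Prop := Multiset.card S.right = 1

/-- Rule instances of the standard labelled calculi, presented as a relation
between a conclusion and its list of premisses.  The flag `tr` enables the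
transitivity rule (giving ℓK4 rather than ℓK), the flag `thn` enables the
relational thinning rule `th`, and the flag `ir` imposes the restriction that
the →-right and □-right rules have exactly one formula on the RHS (giving the
multi-succedent intuitionistic system mℓIK4). -/
inductive Rule (tr thn ir : Bool) : Sequent → List Sequent → Prop
  | id (R : Set (ℕ × ℕ)) (x p : ℕ) :
      Rule tr thn ir ⟨R, {(x, Formula.atom p)}, {(x, Formula.atom p)}⟩ []
  | cut (R : Set (ℕ × ℕ)) (Γ Γ' Δ Δ' : Multiset LFormula) (x : ℕ) (A : Formula) :
      Rule tr thn ir ⟨R, Γ + Γ', Δ + Δ'⟩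
        [⟨R, Γ, (x, A) ::ₘ Δ⟩, ⟨R, (x, A) ::ₘ Γ', Δ'⟩]
  | wkL (R : Set (ℕ × ℕ)) (Γ Δ : Multiset LFormula) (x : ℕ) (A : Formula) :
      Rule tr thn ir ⟨R, (x, A) ::ₘ Γ, Δ⟩ [⟨R, Γ, Δ⟩]
  | wkR (R : Set (ℕ × ℕ)) (Γ Δ : Multiset LFormula) (x : ℕ) (A : Formula) :
      Rule tr thn ir ⟨R, Γ, (x, A) ::ₘ Δ⟩ [⟨R, Γ, Δ⟩]
  | ctrL (R : Set (ℕ × ℕ)) (Γ Δ : Multiset LFormula) (x : ℕ) (A : Formula) :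
      Rule tr thn ir ⟨R, (x, A) ::ₘ Γ, Δ⟩ [⟨R, (x, A) ::ₘ (x, A) ::ₘ Γ, Δ⟩]
  | ctrR (R : Set (ℕ × ℕ)) (Γ Δ : Multiset LFormula) (x : ℕ) (A : Formula) :
      Rule tr thn ir ⟨R, Γ, (x, A) ::ₘ Δ⟩ [⟨R, Γ, (x, A) ::ₘ (x, A) ::ₘ Δ⟩]
  | th (R R' : Set (ℕ × ℕ)) (Γ Δ : Multiset LFormula) :
      thn = true → Rule tr thn ir ⟨R ∪ R', Γ, Δ⟩ [⟨R, Γ, Δ⟩]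
  | botL (R : Set (ℕ × ℕ)) (Γ Δ : Multiset LFormula) (x : ℕ) :
      Rule tr thn ir ⟨R, (x, Formula.bot) ::ₘ Γ, Δ⟩ []
  | impL (R : Set (ℕ × ℕ)) (Γ Γ' Δ Δ' : Multiset LFormula) (x : ℕ) (A B : Formula) :
      Rule tr thn ir ⟨R, (x, Formula.imp A B) ::ₘ (Γ + Γ'), Δ + Δ'⟩
        [⟨R, Γ, (x, A) ::ₘ Δ⟩, ⟨R, (x, B) ::ₘ Γ', Δ'⟩]
  | impR (R : Set (ℕ × ℕ)) (Γ Δ : Multiset LFormula) (x : ℕ) (A B : Formula) :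
      (ir = true → Δ = 0) →
      Rule tr thn ir ⟨R, Γ, (x, Formula.imp A B) ::ₘ Δ⟩ [⟨R, (x, A) ::ₘ Γ, (x, B) ::ₘ Δ⟩]
  | andL₁ (R : Set (ℕ × ℕ)) (Γ Δ : Multiset LFormula) (x : ℕ) (A B : Formula) :
      Rule tr thn ir ⟨R, (x, Formula.and A B) ::ₘ Γ, Δ⟩ [⟨R, (x, A) ::ₘ Γ, Δ⟩]
  | andL₂ (R : Set (ℕ × ℕ)) (Γ Δ : Multiset LFormula) (x : ℕ) (A B : Formula) :
      Rule tr thn ir ⟨R, (x, Formula.and A B) ::ₘ Γ, Δ⟩ [⟨R, (x, B) ::ₘ Γ, Δ⟩]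
  | orL (R : Set (ℕ × ℕ)) (Γ Δ : Multiset LFormula) (x : ℕ) (A B : Formula) :
      Rule tr thn ir ⟨R, (x, Formula.or A B) ::ₘ Γ, Δ⟩
        [⟨R, (x, A) ::ₘ Γ, Δ⟩, ⟨R, (x, B) ::ₘ Γ, Δ⟩]
  | orR₁ (R : Set (ℕ × ℕ)) (Γ Δ : Multiset LFormula) (x : ℕ) (A B : Formula) :
      Rule tr thn ir ⟨R, Γ, (x, Formula.or A B) ::ₘ Δ⟩ [⟨R, Γ, (x, A) ::ₘ Δ⟩]
  | orR₂ (R : Set (ℕ × ℕ)) (Γ Δ : Multiset LFormula) (x : ℕ) (A B : Formula) :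
      Rule tr thn ir ⟨R, Γ, (x, Formula.or A B) ::ₘ Δ⟩ [⟨R, Γ, (x, B) ::ₘ Δ⟩]
  | andR (R : Set (ℕ × ℕ)) (Γ Δ : Multiset LFormula) (x : ℕ) (A B : Formula) :
      Rule tr thn ir ⟨R, Γ, (x, Formula.and A B) ::ₘ Δ⟩
        [⟨R, Γ, (x, A) ::ₘ Δ⟩, ⟨R, Γ, (x, B) ::ₘ Δ⟩]
  | diaL (R : Set (ℕ × ℕ)) (Γ Δ : Multiset LFormula) (x y : ℕ) (A : Formula) :
      Fresh y ⟨R, (x, Formula.dia A) ::ₘ Γ, Δ⟩ →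
      Rule tr thn ir ⟨R, (x, Formula.dia A) ::ₘ Γ, Δ⟩
        [⟨insert (x, y) R, (y, A) ::ₘ Γ, Δ⟩]
  | diaR (R : Set (ℕ × ℕ)) (Γ Δ : Multiset LFormula) (x y : ℕ) (A : Formula) :
      (x, y) ∈ R →
      Rule tr thn ir ⟨R, Γ, (x, Formula.dia A) ::ₘ Δ⟩ [⟨R, Γ, (y, A) ::ₘ Δ⟩]
  | boxR (R : Set (ℕ × ℕ)) (Γ Δ : Multiset LFormula) (x y : ℕ) (A : Formula) :
      (ir = true → Δ = 0) →
      Fresh y ⟨R, Γ, (x, Formula.box A) ::ₘ Δ⟩ →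
      Rule tr thn ir ⟨R, Γ, (x, Formula.box A) ::ₘ Δ⟩
        [⟨insert (x, y) R, Γ, (y, A) ::ₘ Δ⟩]
  | boxL (R : Set (ℕ × ℕ)) (Γ Δ : Multiset LFormula) (x y : ℕ) (A : Formula) :
      (x, y) ∈ R →
      Rule tr thn ir ⟨R, (x, Formula.box A) ::ₘ Γ, Δ⟩ [⟨R, (y, A) ::ₘ Γ, Δ⟩]
  | trans (R : Set (ℕ × ℕ)) (Γ Δ : Multiset LFormula) (x y z : ℕ) :
      tr = true → (x, y) ∈ R → (y, z) ∈ R →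
      Rule tr thn ir ⟨R, Γ, Δ⟩ [⟨insert (x, z) R, Γ, Δ⟩]

/-- The labelled calculus ℓK. -/
def RuleLK : Sequent → List Sequent → Prop := Rule false true false

/-- The labelled calculus ℓK4 (= ℓK + transitivity rule). -/
def RuleLK4 : Sequent → List Sequent → Prop := Rule true true false

/-- ℓK4 without the thinning rule th. -/
def RuleLK4NoTh : Sequent → List Sequent → Prop := Rule true false false

/-- The multi-succedent intuitionistic calculus mℓIK4: ℓK4 where the →-right
and □-right rules must have exactly one formula on the RHS. -/
def RuleMLIK4 : Sequent → List Sequent → Prop := Rule true true true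

/-- The single-succedent intuitionistic calculus ℓIK4: the restriction of ℓK4
to sequents with exactly one formula on the RHS. -/
def RuleLIK4 : Sequent → List Sequent → Prop :=
  fun S ps => RuleLK4 S ps ∧ SingleRHS S ∧ ∀ p ∈ ps, SingleRHS p

/-- ℓIK4 without the thinning rule th. -/
def RuleLIK4NoTh : Sequent → List Sequent → Prop :=
  fun S ps => RuleLK4NoTh S ps ∧ SingleRHS S ∧ ∀ p ∈ ps, SingleRHS p

/-- Finite (wellfounded) derivability from a set of rule instances. -/
inductive Deriv (rule : Sequent → List Sequent → Prop) : Sequent → Prop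
  | step (S : Sequent) (prems : List Sequent) :
      rule S prems → (∀ S' ∈ prems, Deriv rule S') → Deriv rule S

/-! ### Non-wellfounded proofs -/

/-- A (possibly infinite) preproof of `S₀`: a tree of sequents, given as a
partial labelling of finite paths (lists of child indices), whose root is `S₀`
and in which every node is the conclusion of a rule instance whose premisses
are exactly its children. -/
structure Preproof (rule : Sequent → List Sequent → Prop) (S₀ : Sequent) : Type where
  node : List ℕ → Option Sequent
  root : node [] = some S₀
  children : ∀ p S, node p = some S →
    ∃ prems : List Sequent, rule S prems ∧ ∀ i : ℕ, node (p ++ [i]) = prems[i]?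

/-- The path of length `n` along the branch determined by `f`. -/
def branchPath (f : ℕ → ℕ) (n : ℕ) : List ℕ := (List.range n).map f

/-- An infinite sequence of sequents (a branch) has a progressing trace:
from some point on there are labels `x i` occurring in the `i`-th sequent with
either `x (i+1) = x i` or the relational atom `(x i) R (x (i+1))` occurring in
the `i`-th sequent, the latter happening infinitely often. -/
def Progressing (Sb : ℕ → Sequent) : Prop :=
  ∃ (k : ℕ) (x : ℕ → ℕ),
    (∀ i, k ≤ i → x i ∈ (Sb i).vars) ∧
    (∀ i, k ≤ i → x (i + 1) = x i ∨ (x i, x (i + 1)) ∈ (Sb i).rel) ∧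
    (∀ n, ∃ i, n ≤ i ∧ k ≤ i ∧ (x i, x (i + 1)) ∈ (Sb i).rel)

/-- `S₀` has an ∞-proof: a preproof all of whose infinite branches have a
progressing trace. -/
def InfProof (rule : Sequent → List Sequent → Prop) (S₀ : Sequent) : Prop :=
  ∃ P : Preproof rule S₀,
    ∀ (f : ℕ → ℕ) (Sb : ℕ → Sequent),
      (∀ n, P.node (branchPath f n) = some (Sb n)) → Progressing Sb

/-! ### Birelational semantics -/

/-- A birelational model on the set of worlds `W`: an intuitionistic partial
order `le`, an accessibility relation `acc` satisfying the frame conditions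
(F1) and (F2), and a monotone valuation. -/
structure Birel (W : Type) : Type where
  le : W → W → Prop
  le_refl : ∀ w, le w w
  le_trans : ∀ u v w, le u v → le v w → le u w
  le_antisymm : ∀ u v, le u v → le v u → u = v
  acc : W → W → Prop
  F1 : ∀ w w' v, le w w' → acc w v → ∃ v', le v v' ∧ acc w' v'
  F2 : ∀ w v v', acc w v → le v v' → ∃ w', le w w' ∧ acc w' v'
  val : W → ℕ → Prop
  val_mono : ∀ w w', le w w' → ∀ p, val w p → val w' p

/-- Birelational satisfaction. -/
def bsat {W : Type} (B : Birel W) : W → Formula → Prop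
  | w, Formula.atom p  => B.val w p
  | _, Formula.bot     => False
  | w, Formula.and A C => bsat B w A ∧ bsat B w C
  | w, Formula.or  A C => bsat B w A ∨ bsat B w C
  | w, Formula.imp A C => ∀ w', B.le w w' → bsat B w' A → bsat B w' C
  | w, Formula.box A   => ∀ w' v, B.le w w' → B.acc w' v → bsat B v A
  | w, Formula.dia A   => ∃ v, B.acc w v ∧ bsat B v A

/-- Membership in the class birel-IGL: the accessibility relation is
transitive and the composite ≤;R is terminating. -/
def BirelIGL {W : Type} (B : Birel W) : Prop :=
  Transitive B.acc ∧ Terminating (fun u v => ∃ m, B.le u m ∧ B.acc m v)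

/-- An interpretation of a sequent into a birelational model: a map on labels
sending relational atoms of the sequent to accessibility-related worlds. -/
def Interp {W : Type} (B : Birel W) (I : ℕ → W) (S : Sequent) : Prop :=
  ∀ x y, (x, y) ∈ S.rel → B.acc (I x) (I y)

/-- `B, I ⊨ S`. -/
def seqSat {W : Type} (B : Birel W) (I : ℕ → W) (S : Sequent) : Prop :=
  (∀ q ∈ S.left, bsat B (I q.1) q.2) → ∃ q ∈ S.right, bsat B (I q.1) q.2

/-- `B ⊨ S`: satisfaction under every interpretation. -/
def seqValid {W : Type} (B : Birel W) (S : Sequent) : Prop :=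
  ∀ I : ℕ → W, Interp B I S → seqSat B I S

/-- Conjunction of a nonempty list of formulas `A ∧ B₁ ∧ ... ∧ Bₙ`. -/
def conjList : Formula → List Formula → Formula
  | A, [] => A
  | A, B :: l => Formula.and A (conjList B l)

/-! ### (Quasi-)trees -/

/-- A set of relational atoms is a tree: there is a root from which every
other variable is reachable by a unique path of relational atoms. -/
def IsTree (R : Set (ℕ × ℕ)) : Prop :=
  ∃ x₀ ∈ relVars R, ∀ x ∈ relVars R, x ≠ x₀ →
    ∃! l : List ℕ, l ≠ [] ∧ List.Chain (fun a b => (a, b) ∈ R) x₀ l ∧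
      l.getLast? = some x

/-- A quasi-tree: squeezed between a tree and its transitive closure. -/
def IsQuasiTree (R : Set (ℕ × ℕ)) : Prop :=
  ∃ R₀ : Set (ℕ × ℕ), IsTree R₀ ∧ R₀ ⊆ R ∧
    ∀ q ∈ R, Relation.TransGen (fun a b => (a, b) ∈ R₀) q.1 q.2

/-- The (single-succedent) sequent `R, Γ ⇒ x:A` is quasi-tree-like. -/
def QuasiTreeLike (R : Set (ℕ × ℕ)) (Γ : Multiset LFormula) (x : ℕ) : Prop :=
  (R = ∅ ∧ mLabels Γ ⊆ {x}) ∨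
  (IsQuasiTree R ∧ mLabels Γ ∪ {x} ⊆ relVars R)

/-! ### Kripke predicate structures -/

/-- A Kripke (predicate) structure: partially ordered worlds, growing nonempty
domains, monotone interpretations of the unary predicates, and growing binary
relations on the domains. -/
structure Kripke (W D : Type) : Type where
  le : W → W → Prop
  le_refl : ∀ w, le w w
  le_trans : ∀ u v w, le u v → le v w → le u w
  le_antisymm : ∀ u v, le u v → le v u → u = v
  Dom : W → Set D
  Dom_ne : ∀ w, (Dom w).Nonempty
  Dom_mono : ∀ w w', le w w' → Dom w ⊆ Dom w'
  Pr : W → ℕ → Set D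
  Pr_sub : ∀ w p, Pr w p ⊆ Dom w
  Pr_mono : ∀ w w' p, le w w' → Pr w p ⊆ Pr w' p
  Rel : W → D → D → Prop
  Rel_dom : ∀ w d e, Rel w d e → d ∈ Dom w ∧ e ∈ Dom w
  Rel_mono : ∀ w w' d e, le w w' → Rel w d e → Rel w' d e

/-- Satisfaction `K, w ⊨^ρ ⟨A⟩ₓ` of the standard translation of `A`; since the
translation of `A` at `x` has only `x` free, satisfaction is presented through
the value `d = ρ x` of the environment at `x`. -/
def ksat {W D : Type} (K : Kripke W D) : W → D → Formula → Prop
  | w, d, Formula.atom p  => d ∈ K.Pr w p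
  | _, _, Formula.bot     => False
  | w, d, Formula.and A B => ksat K w d A ∧ ksat K w d B
  | w, d, Formula.or  A B => ksat K w d A ∨ ksat K w d B
  | w, d, Formula.imp A B => ∀ w', K.le w w' → ksat K w' d A → ksat K w' d B
  | w, d, Formula.box A   => ∀ w' e, K.le w w' → K.Rel w' d e → ksat K w' e A
  | w, d, Formula.dia A   => ∃ e, K.Rel w d e ∧ ksat K w e A

/-- Membership in the class pred-IGL: each `R_w` is transitive and the
composite `≤_{D_W} ; R_{D_W}` on pairs `(w, d)` with `d ∈ D_w` is terminating. -/
def PredIGL {W D : Type} (K : Kripke W D) : Prop :=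
  (∀ w, Transitive (K.Rel w)) ∧
  ¬ ∃ (f : ℕ → W) (g : ℕ → D),
      ∀ n, g n ∈ K.Dom (f n) ∧ K.le (f n) (f (n + 1)) ∧
        K.Rel (f (n + 1)) (g n) (g (n + 1))


/-! ### Auxiliary development for soundness -/

section Soundness

variable {W : Type} (B : Birel W)

/-- Monotonicity of birelational satisfaction along `≤`. -/
lemma bsat_mono : ∀ (A : Formula) {w w' : W}, B.le w w' → bsat B w A → bsat B w' A := by
  intro A
  induction A with
  | atom p => intro w w' h hw; exact B.val_mono w w' h p hw
  | bot => intro w w' h hw; exact hw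
  | and A C ihA ihC =>
      intro w w' h hw
      simp only [bsat] at hw ⊢
      exact ⟨ihA h hw.1, ihC h hw.2⟩
  | or A C ihA ihC =>
      intro w w' h hw
      simp only [bsat] at hw ⊢
      rcases hw with hw | hw
      · exact Or.inl (ihA h hw)
      · exact Or.inr (ihC h hw)
  | imp A C ihA ihC =>
      intro w w' h hw
      simp only [bsat] at hw ⊢
      intro u hu hA
      exact hw u (B.le_trans _ _ _ h hu) hA
  | box A ih =>
      intro w w' h hw
      simp only [bsat] at hw ⊢
      intro u v hu hv
      exact hw u v (B.le_trans _ _ _ h hu) hv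
  | dia A ih =>
      intro w w' h hw
      simp only [bsat] at hw ⊢
      obtain ⟨v, hv, hA⟩ := hw
      obtain ⟨v', hvv', hacc⟩ := B.F1 w w' v h hv
      exact ⟨v', hacc, ih hvv' hA⟩

lemma dropLast_take' {l : List ℕ} {k : ℕ} (h : k < l.length) :
    (l.take (k+1)).dropLast = l.take k := by
  rw [List.dropLast_eq_take, List.take_take, List.length_take]
  congr 1
  omega

lemma mem_take_of_closed {U : Set (List ℕ)}
    (hcl : ∀ p ∈ U, 2 ≤ p.length → p.dropLast ∈ U) :
    ∀ p ∈ U, ∀ k, 1 ≤ k → k ≤ p.length → p.take k ∈ U := by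
  intro p hp k h1 h2
  have key : ∀ d k, 1 ≤ k → k + d = p.length → p.take k ∈ U := by
    intro d
    induction d with
    | zero =>
        intro k h1 h2
        rw [show k = p.length by omega, List.take_length]
        exact hp
    | succ d ih =>
        intro k h1 h2
        have hk1 : p.take (k+1) ∈ U := ih (k+1) (by omega) (by omega)
        have hd : (p.take (k+1)).dropLast = p.take k := dropLast_take' (by omega)
        rw [← hd]
        exact hcl _ hk1 (by rw [List.length_take]; omega)
  exact key (p.length - k) k h1 (by omega)

/-- Chains of accessibility steps along prefixes compose by transitivity. -/
lemma acc_of_prefix (htr : Transitive B.acc) {U : Set (List ℕ)} {J : List ℕ → W}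
    (hne : ∀ p ∈ U, p ≠ [])
    (hcl : ∀ p ∈ U, 2 ≤ p.length → p.dropLast ∈ U)
    (hacc : ∀ p ∈ U, 2 ≤ p.length → B.acc (J p.dropLast) (J p))
    {a b : List ℕ} (ha : a ∈ U) (hb : b ∈ U) (hpre : a <+: b) (hlt : a.length < b.length) :
    B.acc (J a) (J b) := by
  have ha1 : 1 ≤ a.length := by
    cases a with
    | nil => exact absurd rfl (hne _ ha)
    | cons c l => simp
  have heq : b.take a.length = a := (List.prefix_iff_eq_take.mp hpre).symm
  have hlb : a.length ≤ b.length := Nat.le_of_lt hlt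
  have step : ∀ k, 2 ≤ k → k ≤ b.length → a.length ≤ k - 1 →
      B.acc (J (b.take (k-1))) (J (b.take k)) := by
    intro k h2 hkb _
    have hmem : b.take k ∈ U := mem_take_of_closed hcl b hb k (by omega) hkb
    have hlen : (b.take k).length = k := by rw [List.length_take]; omega
    have hdl : (b.take k).dropLast = b.take (k-1) := by
      have := dropLast_take' (l := b) (k := k-1) (by omega)
      rwa [show k - 1 + 1 = k by omega] at this
    have := hacc _ hmem (by omega)
    rwa [hdl] at this
  have key : ∀ k, a.length + 1 ≤ k → k ≤ b.length → B.acc (J a) (J (b.take k)) := by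
    intro k hk
    induction k, hk using Nat.le_induction with
    | base =>
        intro hkb
        have := step (a.length + 1) (by omega) hkb (by omega)
        rwa [show a.length + 1 - 1 = a.length by omega, heq] at this
    | succ k hk ih =>
        intro hkb
        have h1 := ih (by omega)
        have h2 := step (k+1) (by omega) hkb (by omega)
        rw [show k + 1 - 1 = k by omega] at h2
        exact htr h1 h2
  have := key b.length (by omega) le_rfl
  rwa [List.take_length] at this

variable (J : List ℕ → W) (U : Set (List ℕ)) (p₀ : List ℕ) (w' : W)

lemma le_cast {a b : List ℕ} (h : a = b) {u : W} (hle : B.le (J a) u) :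
    B.le (J b) u := by rw [← h]; exact hle

open scoped Classical

/-- The `F2`-chain moving the ancestors of `p₀` upwards. -/
noncomputable def Kchain
    (hacc : ∀ k, 2 ≤ k → k ≤ p₀.length → B.acc (J (p₀.take (k-1))) (J (p₀.take k)))
    (hw' : B.le (J p₀) w') : (j : ℕ) → {u : W // B.le (J (p₀.take (p₀.length - j))) u}
  | 0 => ⟨w', by simpa [List.take_length] using hw'⟩
  | (j+1) =>
      if h : 2 ≤ p₀.length - j then
        let prev := Kchain hacc hw' j
        let e := B.F2 (J (p₀.take (p₀.length - j - 1))) (J (p₀.take (p₀.length - j))) prev.1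
          (hacc (p₀.length - j) h (Nat.sub_le _ _)) prev.2
        ⟨e.choose, le_cast B J (by rw [show p₀.length - j - 1 = p₀.length - (j+1) by omega]) e.choose_spec.1⟩
      else ⟨J (p₀.take (p₀.length - (j+1))), B.le_refl _⟩

lemma Kchain_zero
    (hacc : ∀ k, 2 ≤ k → k ≤ p₀.length → B.acc (J (p₀.take (k-1))) (J (p₀.take k)))
    (hw' : B.le (J p₀) w') : (Kchain B J p₀ w' hacc hw' 0).1 = w' := rfl

lemma Kchain_acc
    (hacc : ∀ k, 2 ≤ k → k ≤ p₀.length → B.acc (J (p₀.take (k-1))) (J (p₀.take k)))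
    (hw' : B.le (J p₀) w') (j : ℕ) (h : 2 ≤ p₀.length - j) :
    B.acc (Kchain B J p₀ w' hacc hw' (j+1)).1 (Kchain B J p₀ w' hacc hw' j).1 := by
  rw [Kchain, dif_pos h]
  exact (B.F2 _ _ _ (hacc (p₀.length - j) h (Nat.sub_le _ _))
    (Kchain B J p₀ w' hacc hw' j).2).choose_spec.2

/-- The repaired labelling: moves the whole tree component of `p₀` upwards so
that `p₀` is sent to `w'`, using `F2` along the ancestors and `F1` elsewhere. -/
noncomputable def Jfix
    (hacc : ∀ k, 2 ≤ k → k ≤ p₀.length → B.acc (J (p₀.take (k-1))) (J (p₀.take k)))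
    (hw' : B.le (J p₀) w') (p : List ℕ) : {u : W // B.le (J p) u} :=
  if h1 : p ≠ [] ∧ p <+: p₀ then
    ⟨(Kchain B J p₀ w' hacc hw' (p₀.length - p.length)).1,
      le_cast B J (by
        rw [show p₀.length - (p₀.length - p.length) = p.length from by
          have hl : p.length ≤ p₀.length := h1.2.length_le
          omega]
        exact (List.prefix_iff_eq_take.mp h1.2).symm)
      (Kchain B J p₀ w' hacc hw' (p₀.length - p.length)).2⟩
  else if h2 : p ≠ [] ∧ p.head? = p₀.head? ∧ p ∈ U ∧ 2 ≤ p.length ∧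
      B.acc (J p.dropLast) (J p) then
    let prev := Jfix hacc hw' p.dropLast
    let e := B.F1 (J p.dropLast) prev.1 (J p) prev.2 h2.2.2.2.2
    ⟨e.choose, e.choose_spec.1⟩
  else ⟨J p, B.le_refl _⟩
  termination_by p.length
  decreasing_by
    have h1 : 0 < p.length := List.length_pos_iff.mpr h2.1
    have h2 := List.length_dropLast (xs := p)
    omega

lemma head?_of_prefix {p q : List ℕ} (h : p <+: q) (hp : p ≠ []) : p.head? = q.head? := by
  obtain ⟨t, rfl⟩ := h
  cases p with
  | nil => exact absurd rfl hp
  | cons a l => rfl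

lemma head?_dropLast {p : List ℕ} (h : 2 ≤ p.length) : p.dropLast.head? = p.head? := by
  match p with
  | a :: b :: l => simp
  | [] => simp at h
  | [a] => simp at h

lemma Jfix_val_prefix
    (hacc : ∀ k, 2 ≤ k → k ≤ p₀.length → B.acc (J (p₀.take (k-1))) (J (p₀.take k)))
    (hw' : B.le (J p₀) w') {p : List ℕ} (h1 : p ≠ []) (h2 : p <+: p₀) :
    (Jfix B J U p₀ w' hacc hw' p).1 =
      (Kchain B J p₀ w' hacc hw' (p₀.length - p.length)).1 := by
  conv_lhs => unfold Jfix
  rw [dif_pos ⟨h1, h2⟩]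

lemma Jfix_val_other
    (hacc : ∀ k, 2 ≤ k → k ≤ p₀.length → B.acc (J (p₀.take (k-1))) (J (p₀.take k)))
    (hw' : B.le (J p₀) w') {p : List ℕ}
    (h1 : ¬(p ≠ [] ∧ p <+: p₀))
    (h2 : ¬(p ≠ [] ∧ p.head? = p₀.head? ∧ p ∈ U ∧ 2 ≤ p.length ∧
      B.acc (J p.dropLast) (J p))) :
    (Jfix B J U p₀ w' hacc hw' p).1 = J p := by
  conv_lhs => unfold Jfix
  rw [dif_neg h1, dif_neg h2]

lemma Jfix_p0
    (hacc : ∀ k, 2 ≤ k → k ≤ p₀.length → B.acc (J (p₀.take (k-1))) (J (p₀.take k)))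
    (hw' : B.le (J p₀) w') (hp₀ : p₀ ≠ []) :
    (Jfix B J U p₀ w' hacc hw' p₀).1 = w' := by
  rw [Jfix_val_prefix B J U p₀ w' hacc hw' hp₀ (List.prefix_refl p₀), Nat.sub_self]
  rfl

lemma Jfix_acc
    (hacc : ∀ k, 2 ≤ k → k ≤ p₀.length → B.acc (J (p₀.take (k-1))) (J (p₀.take k)))
    (hw' : B.le (J p₀) w')
    (hne : ∀ p ∈ U, p ≠ [])
    (hcl : ∀ p ∈ U, 2 ≤ p.length → p.dropLast ∈ U)
    (haccU : ∀ p ∈ U, 2 ≤ p.length → B.acc (J p.dropLast) (J p)) :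
    ∀ p ∈ U, 2 ≤ p.length →
      B.acc (Jfix B J U p₀ w' hacc hw' p.dropLast).1 (Jfix B J U p₀ w' hacc hw' p).1 := by
  intro p hpU hlen
  have hpne : p ≠ [] := hne _ hpU
  have hdne : p.dropLast ≠ [] := by
    intro h
    have := List.length_dropLast (xs := p)
    rw [h] at this
    simp at this
    omega
  by_cases hpre : p <+: p₀
  · have hdpre : p.dropLast <+: p₀ := (List.dropLast_prefix p).trans hpre
    rw [Jfix_val_prefix B J U p₀ w' hacc hw' hpne hpre,
        Jfix_val_prefix B J U p₀ w' hacc hw' hdne hdpre]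
    have hl : p.length ≤ p₀.length := hpre.length_le
    have hld : p.dropLast.length = p.length - 1 := List.length_dropLast (xs := p)
    rw [hld, show p₀.length - (p.length - 1) = (p₀.length - p.length) + 1 by omega]
    exact Kchain_acc B J p₀ w' hacc hw' (p₀.length - p.length) (by omega)
  · by_cases hhd : p.head? = p₀.head?
    · -- F1 branch for p
      have hcond : p ≠ [] ∧ p.head? = p₀.head? ∧ p ∈ U ∧ 2 ≤ p.length ∧
          B.acc (J p.dropLast) (J p) :=
        ⟨hpne, hhd, hpU, hlen, haccU _ hpU hlen⟩
      have : (Jfix B J U p₀ w' hacc hw' p).1 =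
          (B.F1 (J p.dropLast) (Jfix B J U p₀ w' hacc hw' p.dropLast).1 (J p)
            (Jfix B J U p₀ w' hacc hw' p.dropLast).2 hcond.2.2.2.2).choose := by
        conv_lhs => unfold Jfix
        rw [dif_neg (fun hc => hpre hc.2), dif_pos hcond]
      rw [this]
      exact (B.F1 (J p.dropLast) (Jfix B J U p₀ w' hacc hw' p.dropLast).1 (J p)
        (Jfix B J U p₀ w' hacc hw' p.dropLast).2 hcond.2.2.2.2).choose_spec.2
    · -- untouched component
      have hd_hd : p.dropLast.head? = p.head? := head?_dropLast hlen
      have h1p : ¬(p ≠ [] ∧ p <+: p₀) := fun hc => hpre hc.2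
      have h2p : ¬(p ≠ [] ∧ p.head? = p₀.head? ∧ p ∈ U ∧ 2 ≤ p.length ∧
          B.acc (J p.dropLast) (J p)) := fun hc => hhd hc.2.1
      have h1d : ¬(p.dropLast ≠ [] ∧ p.dropLast <+: p₀) := by
        rintro ⟨hne', hpre'⟩
        exact hhd (hd_hd ▸ head?_of_prefix hpre' hne')
      have h2d : ¬(p.dropLast ≠ [] ∧ p.dropLast.head? = p₀.head? ∧ p.dropLast ∈ U ∧
          2 ≤ p.dropLast.length ∧ B.acc (J p.dropLast.dropLast) (J p.dropLast)) := by
        rintro ⟨_, hh, _⟩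
        exact hhd (hd_hd ▸ hh)
      rw [Jfix_val_other B J U p₀ w' hacc hw' h1p h2p,
          Jfix_val_other B J U p₀ w' hacc hw' h1d h2d]
      exact haccU _ hpU hlen

/-- The repair lemma: any single label can be moved upwards along `≤`,
moving the whole labelling monotonically while keeping accessibility along
tree edges. -/
lemma repair
    (hne : ∀ p ∈ U, p ≠ [])
    (hcl : ∀ p ∈ U, 2 ≤ p.length → p.dropLast ∈ U)
    (haccU : ∀ p ∈ U, 2 ≤ p.length → B.acc (J p.dropLast) (J p))
    (hp₀U : p₀ ∈ U) (hw' : B.le (J p₀) w') :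
    ∃ J' : List ℕ → W, J' p₀ = w' ∧ (∀ p, B.le (J p) (J' p)) ∧
      (∀ p ∈ U, 2 ≤ p.length → B.acc (J' p.dropLast) (J' p)) := by
  have hacc : ∀ k, 2 ≤ k → k ≤ p₀.length → B.acc (J (p₀.take (k-1))) (J (p₀.take k)) := by
    intro k h2 hk
    have hmem : p₀.take k ∈ U := mem_take_of_closed hcl p₀ hp₀U k (by omega) hk
    have hlen : (p₀.take k).length = k := by rw [List.length_take]; omega
    have hdl : (p₀.take k).dropLast = p₀.take (k-1) := by
      have := dropLast_take' (l := p₀) (k := k-1) (by omega)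
      rwa [show k - 1 + 1 = k by omega] at this
    have := haccU _ hmem (by omega)
    rwa [hdl] at this
  refine ⟨fun p => (Jfix B J U p₀ w' hacc hw' p).1, ?_, ?_, ?_⟩
  · exact Jfix_p0 B J U p₀ w' hacc hw' (hne _ hp₀U)
  · intro p; exact (Jfix B J U p₀ w' hacc hw' p).2
  · exact Jfix_acc B J U p₀ w' hacc hw' hne hcl haccU

/-- The invariant carried along the constructed branch. -/
structure SINV (B : Birel W) (S : Sequent) (σ : ℕ → List ℕ) (J : List ℕ → W)
    (U : Set (List ℕ)) : Prop where
  fin : U.Finite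
  nemp : ∀ p ∈ U, p ≠ []
  closed : ∀ p ∈ U, 2 ≤ p.length → p.dropLast ∈ U
  memU : ∀ z, σ z ∈ U
  pre : ∀ q ∈ S.rel, σ q.1 <+: σ q.2 ∧ (σ q.1).length < (σ q.2).length
  accE : ∀ p ∈ U, 2 ≤ p.length → B.acc (J p.dropLast) (J p)
  tt : ∀ q ∈ S.left, bsat B (J (σ q.1)) q.2
  ff : ∀ q ∈ S.right, ¬ bsat B (J (σ q.1)) q.2

lemma SINV.interp {B : Birel W} {S σ J U} (hinv : SINV B S σ J U)
    (htr : Transitive B.acc) {a b : ℕ} (h : (a, b) ∈ S.rel) :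
    B.acc (J (σ a)) (J (σ b)) := by
  obtain ⟨h1, h2⟩ := hinv.pre (a, b) h
  exact acc_of_prefix B htr hinv.nemp hinv.closed hinv.accE (hinv.memU a) (hinv.memU b) h1 h2

lemma mem_vars_left {S : Sequent} {z : ℕ} {A : Formula} (h : (z, A) ∈ S.left) :
    z ∈ S.vars := Or.inl (Or.inr ⟨A, h⟩)

lemma mem_vars_right {S : Sequent} {z : ℕ} {A : Formula} (h : (z, A) ∈ S.right) :
    z ∈ S.vars := Or.inr ⟨A, h⟩

lemma mem_vars_rel_l {S : Sequent} {a b : ℕ} (h : (a, b) ∈ S.rel) :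
    a ∈ S.vars := Or.inl (Or.inl ⟨b, Or.inl h⟩)

lemma mem_vars_rel_r {S : Sequent} {a b : ℕ} (h : (a, b) ∈ S.rel) :
    b ∈ S.vars := Or.inl (Or.inl ⟨a, Or.inr h⟩)


lemma rhs_nil {Δ : Multiset LFormula} {z : ℕ} {C : Formula}
    (h : Multiset.card ((z, C) ::ₘ Δ) = 1) : Δ = 0 := by
  rw [Multiset.card_cons] at h
  exact Multiset.card_eq_zero.mp (by omega)

/-- A wrapped form of the repair lemma, at a label of the sequent. -/
lemma repair_at {S : Sequent} {σ : ℕ → List ℕ} {J : List ℕ → W} {U : Set (List ℕ)}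
    (hinv : SINV B S σ J U) (x : ℕ) (w' : W) (hle : B.le (J (σ x)) w') :
    ∃ J' : List ℕ → W, J' (σ x) = w' ∧ (∀ p, B.le (J p) (J' p)) ∧
      (∀ p ∈ U, 2 ≤ p.length → B.acc (J' p.dropLast) (J' p)) :=
  repair B J U (σ x) w' hinv.nemp hinv.closed hinv.accE (hinv.memU x) hle

/-- Local soundness: a falsified conclusion has a falsified premiss, with a
pointwise `≤`-larger interpretation. -/
lemma step_exists (htr : Transitive B.acc)
    {S : Sequent} {prems : List Sequent} (hr : Rule true true false S prems)
    (hS1 : SingleRHS S) (hp1 : ∀ p ∈ prems, SingleRHS p)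
    {σ : ℕ → List ℕ} {J : List ℕ → W} {U : Set (List ℕ)} (hinv : SINV B S σ J U) :
    ∃ (i : ℕ) (hi : i < prems.length) (σ' : ℕ → List ℕ) (J' : List ℕ → W)
      (U' : Set (List ℕ)),
      SINV B (prems.get ⟨i, hi⟩) σ' J' U' ∧ ∀ z ∈ S.vars, B.le (J (σ z)) (J' (σ' z)) := by
  cases hr with
  | id R x p =>
      exact absurd (hinv.tt (x, Formula.atom p) (Multiset.mem_singleton_self _))
        (hinv.ff (x, Formula.atom p) (Multiset.mem_singleton_self _))
  | cut R Γ Γ' Δ Δ' x A =>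
      by_cases hA : bsat B (J (σ x)) A
      · refine ⟨1, by simp, σ, J, U,
          ⟨hinv.fin, hinv.nemp, hinv.closed, hinv.memU, hinv.pre, hinv.accE, ?_, ?_⟩,
          fun z _ => B.le_refl _⟩
        · intro q hq
          rcases Multiset.mem_cons.mp hq with rfl | h
          · exact hA
          · exact hinv.tt q (Multiset.mem_add.mpr (Or.inr h))
        · intro q hq
          exact hinv.ff q (Multiset.mem_add.mpr (Or.inr hq))
      · refine ⟨0, by simp, σ, J, U,
          ⟨hinv.fin, hinv.nemp, hinv.closed, hinv.memU, hinv.pre, hinv.accE, ?_, ?_⟩,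
          fun z _ => B.le_refl _⟩
        · intro q hq
          exact hinv.tt q (Multiset.mem_add.mpr (Or.inl hq))
        · intro q hq
          rcases Multiset.mem_cons.mp hq with rfl | h
          · exact hA
          · exact hinv.ff q (Multiset.mem_add.mpr (Or.inl h))
  | wkL R Γ Δ x A =>
      refine ⟨0, by simp, σ, J, U,
        ⟨hinv.fin, hinv.nemp, hinv.closed, hinv.memU, hinv.pre, hinv.accE, ?_, hinv.ff⟩,
        fun z _ => B.le_refl _⟩
      intro q hq
      exact hinv.tt q (Multiset.mem_cons_of_mem hq)
  | wkR R Γ Δ x A =>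
      exfalso
      have h1 : Multiset.card Δ = 1 := hp1 ⟨R, Γ, Δ⟩ (by simp)
      have h2 : Multiset.card ((x, A) ::ₘ Δ) = 1 := hS1
      rw [Multiset.card_cons] at h2
      omega
  | ctrL R Γ Δ x A =>
      refine ⟨0, by simp, σ, J, U,
        ⟨hinv.fin, hinv.nemp, hinv.closed, hinv.memU, hinv.pre, hinv.accE, ?_, hinv.ff⟩,
        fun z _ => B.le_refl _⟩
      intro q hq
      rcases Multiset.mem_cons.mp hq with rfl | h
      · exact hinv.tt _ (Multiset.mem_cons_self _ _)
      · rcases Multiset.mem_cons.mp h with rfl | h'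
        · exact hinv.tt _ (Multiset.mem_cons_self _ _)
        · exact hinv.tt q (Multiset.mem_cons_of_mem h')
  | ctrR R Γ Δ x A =>
      exfalso
      have h1 : Multiset.card ((x, A) ::ₘ (x, A) ::ₘ Δ) = 1 :=
        hp1 ⟨R, Γ, (x, A) ::ₘ (x, A) ::ₘ Δ⟩ (by simp)
      rw [Multiset.card_cons, Multiset.card_cons] at h1
      omega
  | th R R' Γ Δ _ =>
      refine ⟨0, by simp, σ, J, U,
        ⟨hinv.fin, hinv.nemp, hinv.closed, hinv.memU, ?_, hinv.accE, hinv.tt, hinv.ff⟩,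
        fun z _ => B.le_refl _⟩
      intro q hq
      exact hinv.pre q (Set.mem_union_left _ hq)
  | botL R Γ Δ x =>
      exfalso
      have := hinv.tt (x, Formula.bot) (Multiset.mem_cons_self _ _)
      simp only [bsat] at this
  | impL R Γ Γ' Δ Δ' x A C =>
      by_cases hA : bsat B (J (σ x)) A
      · have hAB := hinv.tt (x, Formula.imp A C) (Multiset.mem_cons_self _ _)
        simp only [bsat] at hAB
        have hC : bsat B (J (σ x)) C := hAB _ (B.le_refl _) hA
        refine ⟨1, by simp, σ, J, U,
          ⟨hinv.fin, hinv.nemp, hinv.closed, hinv.memU, hinv.pre, hinv.accE, ?_, ?_⟩,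
          fun z _ => B.le_refl _⟩
        · intro q hq
          rcases Multiset.mem_cons.mp hq with rfl | h
          · exact hC
          · exact hinv.tt q (Multiset.mem_cons_of_mem (Multiset.mem_add.mpr (Or.inr h)))
        · intro q hq
          exact hinv.ff q (Multiset.mem_add.mpr (Or.inr hq))
      · refine ⟨0, by simp, σ, J, U,
          ⟨hinv.fin, hinv.nemp, hinv.closed, hinv.memU, hinv.pre, hinv.accE, ?_, ?_⟩,
          fun z _ => B.le_refl _⟩
        · intro q hq
          exact hinv.tt q (Multiset.mem_cons_of_mem (Multiset.mem_add.mpr (Or.inl hq)))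
        · intro q hq
          rcases Multiset.mem_cons.mp hq with rfl | h
          · exact hA
          · exact hinv.ff q (Multiset.mem_add.mpr (Or.inl h))
  | impR R Γ Δ x A C hir =>
      have hΔ : Δ = 0 := rhs_nil hS1
      have hf := hinv.ff (x, Formula.imp A C) (Multiset.mem_cons_self _ _)
      simp only [bsat] at hf
      push_neg at hf
      obtain ⟨w', hle, hA, hC⟩ := hf
      obtain ⟨J', hJ'x, hJ'le, hJ'acc⟩ := repair_at B hinv x w' hle
      refine ⟨0, by simp, σ, J', U,
        ⟨hinv.fin, hinv.nemp, hinv.closed, hinv.memU, hinv.pre, hJ'acc, ?_, ?_⟩,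
        fun z _ => hJ'le (σ z)⟩
      · intro q hq
        rcases Multiset.mem_cons.mp hq with rfl | h
        · rw [hJ'x]; exact hA
        · exact bsat_mono B q.2 (hJ'le (σ q.1)) (hinv.tt q h)
      · intro q hq
        rcases Multiset.mem_cons.mp hq with rfl | h
        · rw [hJ'x]; exact hC
        · rw [hΔ] at h; exact absurd h (Multiset.notMem_zero q)
  | andL₁ R Γ Δ x A C =>
      have hAC := hinv.tt (x, Formula.and A C) (Multiset.mem_cons_self _ _)
      simp only [bsat] at hAC
      refine ⟨0, by simp, σ, J, U,
        ⟨hinv.fin, hinv.nemp, hinv.closed, hinv.memU, hinv.pre, hinv.accE, ?_, hinv.ff⟩,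
        fun z _ => B.le_refl _⟩
      intro q hq
      rcases Multiset.mem_cons.mp hq with rfl | h
      · exact hAC.1
      · exact hinv.tt q (Multiset.mem_cons_of_mem h)
  | andL₂ R Γ Δ x A C =>
      have hAC := hinv.tt (x, Formula.and A C) (Multiset.mem_cons_self _ _)
      simp only [bsat] at hAC
      refine ⟨0, by simp, σ, J, U,
        ⟨hinv.fin, hinv.nemp, hinv.closed, hinv.memU, hinv.pre, hinv.accE, ?_, hinv.ff⟩,
        fun z _ => B.le_refl _⟩
      intro q hq
      rcases Multiset.mem_cons.mp hq with rfl | h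
      · exact hAC.2
      · exact hinv.tt q (Multiset.mem_cons_of_mem h)
  | orL R Γ Δ x A C =>
      have hAC := hinv.tt (x, Formula.or A C) (Multiset.mem_cons_self _ _)
      simp only [bsat] at hAC
      rcases hAC with hA | hC
      · refine ⟨0, by simp, σ, J, U,
          ⟨hinv.fin, hinv.nemp, hinv.closed, hinv.memU, hinv.pre, hinv.accE, ?_, hinv.ff⟩,
          fun z _ => B.le_refl _⟩
        intro q hq
        rcases Multiset.mem_cons.mp hq with rfl | h
        · exact hA
        · exact hinv.tt q (Multiset.mem_cons_of_mem h)
      · refine ⟨1, by simp, σ, J, U,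
          ⟨hinv.fin, hinv.nemp, hinv.closed, hinv.memU, hinv.pre, hinv.accE, ?_, hinv.ff⟩,
          fun z _ => B.le_refl _⟩
        intro q hq
        rcases Multiset.mem_cons.mp hq with rfl | h
        · exact hC
        · exact hinv.tt q (Multiset.mem_cons_of_mem h)
  | orR₁ R Γ Δ x A C =>
      have hf := hinv.ff (x, Formula.or A C) (Multiset.mem_cons_self _ _)
      simp only [bsat] at hf
      push_neg at hf
      refine ⟨0, by simp, σ, J, U,
        ⟨hinv.fin, hinv.nemp, hinv.closed, hinv.memU, hinv.pre, hinv.accE, hinv.tt, ?_⟩,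
        fun z _ => B.le_refl _⟩
      intro q hq
      rcases Multiset.mem_cons.mp hq with rfl | h
      · exact hf.1
      · exact hinv.ff q (Multiset.mem_cons_of_mem h)
  | orR₂ R Γ Δ x A C =>
      have hf := hinv.ff (x, Formula.or A C) (Multiset.mem_cons_self _ _)
      simp only [bsat] at hf
      push_neg at hf
      refine ⟨0, by simp, σ, J, U,
        ⟨hinv.fin, hinv.nemp, hinv.closed, hinv.memU, hinv.pre, hinv.accE, hinv.tt, ?_⟩,
        fun z _ => B.le_refl _⟩
      intro q hq
      rcases Multiset.mem_cons.mp hq with rfl | h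
      · exact hf.2
      · exact hinv.ff q (Multiset.mem_cons_of_mem h)
  | andR R Γ Δ x A C =>
      have hf := hinv.ff (x, Formula.and A C) (Multiset.mem_cons_self _ _)
      simp only [bsat] at hf
      by_cases hA : bsat B (J (σ x)) A
      · refine ⟨1, by simp, σ, J, U,
          ⟨hinv.fin, hinv.nemp, hinv.closed, hinv.memU, hinv.pre, hinv.accE, hinv.tt, ?_⟩,
          fun z _ => B.le_refl _⟩
        intro q hq
        rcases Multiset.mem_cons.mp hq with rfl | h
        · exact fun hC => hf ⟨hA, hC⟩
        · exact hinv.ff q (Multiset.mem_cons_of_mem h)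
      · refine ⟨0, by simp, σ, J, U,
          ⟨hinv.fin, hinv.nemp, hinv.closed, hinv.memU, hinv.pre, hinv.accE, hinv.tt, ?_⟩,
          fun z _ => B.le_refl _⟩
        intro q hq
        rcases Multiset.mem_cons.mp hq with rfl | h
        · exact hA
        · exact hinv.ff q (Multiset.mem_cons_of_mem h)
  | diaL R Γ Δ x y A hfresh =>
      have hd := hinv.tt (x, Formula.dia A) (Multiset.mem_cons_self _ _)
      simp only [bsat] at hd
      obtain ⟨v, hv, hvA⟩ := hd
      have hxy : x ≠ y := fun he =>
        hfresh (he ▸ mem_vars_left (Multiset.mem_cons_self _ _))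
      have hinj : Function.Injective (fun m : ℕ => σ x ++ [m]) := by
        intro a b hab; simpa using hab
      have hfin : ((fun m : ℕ => σ x ++ [m]) ⁻¹' U).Finite :=
        hinv.fin.preimage (fun a _ b _ h => hinj h)
      obtain ⟨m, hm⟩ := hfin.infinite_compl.nonempty
      have hqU : σ x ++ [m] ∉ U := hm
      have hσx1 : σ x ≠ [] := hinv.nemp _ (hinv.memU x)
      have hqd : (σ x ++ [m]).dropLast = σ x := by simp
      have hqx : σ x ≠ σ x ++ [m] := fun h => by simpa using congrArg List.length h
      have hUq : ∀ p ∈ U, p ≠ σ x ++ [m] := fun p hp he => hqU (he ▸ hp)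
      refine ⟨0, by simp, Function.update σ y (σ x ++ [m]),
        Function.update J (σ x ++ [m]) v, insert (σ x ++ [m]) U, ⟨?_, ?_, ?_, ?_, ?_, ?_, ?_, ?_⟩, ?_⟩
      · exact hinv.fin.insert _
      · intro p hp
        rcases Set.mem_insert_iff.mp hp with rfl | hp'
        · simp
        · exact hinv.nemp _ hp'
      · intro p hp hl
        rcases Set.mem_insert_iff.mp hp with rfl | hp'
        · rw [hqd]; exact Set.mem_insert_of_mem _ (hinv.memU x)
        · exact Set.mem_insert_of_mem _ (hinv.closed _ hp' hl)
      · intro z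
        by_cases hz : z = y
        · subst hz; rw [Function.update_self]; exact Set.mem_insert _ _
        · rw [Function.update_of_ne hz]; exact Set.mem_insert_of_mem _ (hinv.memU z)
      · intro q' hq'
        rcases Set.mem_insert_iff.mp hq' with rfl | hq'R
        · rw [Function.update_of_ne hxy, Function.update_self]
          exact ⟨⟨[m], rfl⟩, by simp⟩
        · have h1 : q'.1 ≠ y := fun he => hfresh (he ▸ mem_vars_rel_l hq'R)
          have h2 : q'.2 ≠ y := fun he => hfresh (he ▸ mem_vars_rel_r hq'R)
          rw [Function.update_of_ne h1, Function.update_of_ne h2]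
          exact hinv.pre q' hq'R
      · intro p hp hl
        rcases Set.mem_insert_iff.mp hp with rfl | hp'
        · rw [hqd, Function.update_self, Function.update_of_ne hqx]
          exact hv
        · have hpd : p.dropLast ≠ σ x ++ [m] := hUq _ (hinv.closed _ hp' hl)
          rw [Function.update_of_ne (hUq _ hp'), Function.update_of_ne hpd]
          exact hinv.accE _ hp' hl
      · intro q' hq'
        rcases Multiset.mem_cons.mp hq' with rfl | h
        · rw [Function.update_self, Function.update_self]
          exact hvA
        · have h1 : q'.1 ≠ y := fun he =>
            hfresh (he ▸ mem_vars_left (Multiset.mem_cons_of_mem h))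
          rw [Function.update_of_ne h1, Function.update_of_ne (hUq _ (hinv.memU q'.1))]
          exact hinv.tt q' (Multiset.mem_cons_of_mem h)
      · intro q' hq'
        have h1 : q'.1 ≠ y := fun he => hfresh (he ▸ mem_vars_right hq')
        rw [Function.update_of_ne h1, Function.update_of_ne (hUq _ (hinv.memU q'.1))]
        exact hinv.ff q' hq'
      · intro z hz
        have h1 : z ≠ y := fun he => hfresh (he ▸ hz)
        rw [Function.update_of_ne h1, Function.update_of_ne (hUq _ (hinv.memU z))]
        exact B.le_refl _
  | diaR R Γ Δ x y A hxy =>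
      have hacc := hinv.interp htr hxy
      have hf := hinv.ff (x, Formula.dia A) (Multiset.mem_cons_self _ _)
      simp only [bsat] at hf
      push_neg at hf
      refine ⟨0, by simp, σ, J, U,
        ⟨hinv.fin, hinv.nemp, hinv.closed, hinv.memU, hinv.pre, hinv.accE, hinv.tt, ?_⟩,
        fun z _ => B.le_refl _⟩
      intro q hq
      rcases Multiset.mem_cons.mp hq with rfl | h
      · exact hf _ hacc
      · exact hinv.ff q (Multiset.mem_cons_of_mem h)
  | boxR R Γ Δ x y A hir hfresh =>
      have hΔ : Δ = 0 := rhs_nil hS1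
      have hf := hinv.ff (x, Formula.box A) (Multiset.mem_cons_self _ _)
      simp only [bsat] at hf
      push_neg at hf
      obtain ⟨w', v, hle, hwv, hvA⟩ := hf
      obtain ⟨J₁, hJ₁x, hJ₁le, hJ₁acc⟩ := repair_at B hinv x w' hle
      have hxy : x ≠ y := fun he =>
        hfresh (he ▸ mem_vars_right (Multiset.mem_cons_self _ _))
      have hinj : Function.Injective (fun m : ℕ => σ x ++ [m]) := by
        intro a b hab; simpa using hab
      have hfin : ((fun m : ℕ => σ x ++ [m]) ⁻¹' U).Finite :=
        hinv.fin.preimage (fun a _ b _ h => hinj h)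
      obtain ⟨m, hm⟩ := hfin.infinite_compl.nonempty
      have hqU : σ x ++ [m] ∉ U := hm
      have hqd : (σ x ++ [m]).dropLast = σ x := by simp
      have hqx : σ x ≠ σ x ++ [m] := fun h => by simpa using congrArg List.length h
      have hUq : ∀ p ∈ U, p ≠ σ x ++ [m] := fun p hp he => hqU (he ▸ hp)
      refine ⟨0, by simp, Function.update σ y (σ x ++ [m]),
        Function.update J₁ (σ x ++ [m]) v, insert (σ x ++ [m]) U, ⟨?_, ?_, ?_, ?_, ?_, ?_, ?_, ?_⟩, ?_⟩
      · exact hinv.fin.insert _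
      · intro p hp
        rcases Set.mem_insert_iff.mp hp with rfl | hp'
        · simp
        · exact hinv.nemp _ hp'
      · intro p hp hl
        rcases Set.mem_insert_iff.mp hp with rfl | hp'
        · rw [hqd]; exact Set.mem_insert_of_mem _ (hinv.memU x)
        · exact Set.mem_insert_of_mem _ (hinv.closed _ hp' hl)
      · intro z
        by_cases hz : z = y
        · subst hz; rw [Function.update_self]; exact Set.mem_insert _ _
        · rw [Function.update_of_ne hz]; exact Set.mem_insert_of_mem _ (hinv.memU z)
      · intro q' hq'
        rcases Set.mem_insert_iff.mp hq' with rfl | hq'R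
        · rw [Function.update_of_ne hxy, Function.update_self]
          exact ⟨⟨[m], rfl⟩, by simp⟩
        · have h1 : q'.1 ≠ y := fun he => hfresh (he ▸ mem_vars_rel_l hq'R)
          have h2 : q'.2 ≠ y := fun he => hfresh (he ▸ mem_vars_rel_r hq'R)
          rw [Function.update_of_ne h1, Function.update_of_ne h2]
          exact hinv.pre q' hq'R
      · intro p hp hl
        rcases Set.mem_insert_iff.mp hp with rfl | hp'
        · rw [hqd, Function.update_self, Function.update_of_ne hqx, hJ₁x]
          exact hwv
        · have hpd : p.dropLast ≠ σ x ++ [m] := hUq _ (hinv.closed _ hp' hl)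
          rw [Function.update_of_ne (hUq _ hp'), Function.update_of_ne hpd]
          exact hJ₁acc _ hp' hl
      · intro q' hq'
        have h1 : q'.1 ≠ y := fun he => hfresh (he ▸ mem_vars_left hq')
        rw [Function.update_of_ne h1, Function.update_of_ne (hUq _ (hinv.memU q'.1))]
        exact bsat_mono B q'.2 (hJ₁le (σ q'.1)) (hinv.tt q' hq')
      · intro q' hq'
        rcases Multiset.mem_cons.mp hq' with rfl | h
        · rw [Function.update_self, Function.update_self]
          exact hvA
        · rw [hΔ] at h; exact absurd h (Multiset.notMem_zero q')
      · intro z hz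
        have h1 : z ≠ y := fun he => hfresh (he ▸ hz)
        rw [Function.update_of_ne h1, Function.update_of_ne (hUq _ (hinv.memU z))]
        exact hJ₁le (σ z)
  | boxL R Γ Δ x y A hxy =>
      have hacc := hinv.interp htr hxy
      have hb := hinv.tt (x, Formula.box A) (Multiset.mem_cons_self _ _)
      simp only [bsat] at hb
      have hyA : bsat B (J (σ y)) A := hb _ _ (B.le_refl _) hacc
      refine ⟨0, by simp, σ, J, U,
        ⟨hinv.fin, hinv.nemp, hinv.closed, hinv.memU, hinv.pre, hinv.accE, ?_, hinv.ff⟩,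
        fun z _ => B.le_refl _⟩
      intro q hq
      rcases Multiset.mem_cons.mp hq with rfl | h
      · exact hyA
      · exact hinv.tt q (Multiset.mem_cons_of_mem h)
  | trans R Γ Δ x y z _ hxy hyz =>
      refine ⟨0, by simp, σ, J, U,
        ⟨hinv.fin, hinv.nemp, hinv.closed, hinv.memU, ?_, hinv.accE, hinv.tt, hinv.ff⟩,
        fun z' _ => B.le_refl _⟩
      intro q' hq'
      rcases Set.mem_insert_iff.mp hq' with rfl | hq'R
      · obtain ⟨p1, l1⟩ := hinv.pre (x, y) hxy
        obtain ⟨p2, l2⟩ := hinv.pre (y, z) hyz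
        exact ⟨p1.trans p2, lt_trans l1 l2⟩
      · exact hinv.pre q' hq'R

end Soundness


section Branch

variable {W : Type}

/-- A node of the falsified branch: a position in the preproof together with
interpretation data satisfying the invariant. -/
structure BrNode {S₀ : Sequent} (B : Birel W) (P : Preproof RuleLIK4 S₀) : Type where
  path : List ℕ
  S : Sequent
  σ : ℕ → List ℕ
  J : List ℕ → W
  U : Set (List ℕ)
  hnode : P.node path = some S
  hinv : SINV B S σ J U

lemma brstep {S₀ : Sequent} (B : Birel W) (htr : Transitive B.acc)
    (P : Preproof RuleLIK4 S₀) (d : BrNode B P) :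
    ∃ d' : BrNode B P, (∃ i, d'.path = d.path ++ [i]) ∧
      ∀ z ∈ d.S.vars, B.le (d.J (d.σ z)) (d'.J (d'.σ z)) := by
  obtain ⟨prems, hrule, hch⟩ := P.children d.path d.S d.hnode
  obtain ⟨hLK4, hS1, hp1⟩ := hrule
  obtain ⟨i, hi, σ', J', U', hinv', hcompat⟩ := step_exists B htr hLK4 hS1 hp1 d.hinv
  refine ⟨⟨d.path ++ [i], prems.get ⟨i, hi⟩, σ', J', U', ?_, hinv'⟩, ⟨i, rfl⟩, hcompat⟩
  rw [hch i]
  exact List.getElem?_eq_getElem hi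

end Branch

/-- **Soundness of ℓIGL for formulas.** If `∅ ⇒ x:A` has an ∞-proof in ℓIK4
then `A` holds at every world of every birel-IGL model. -/
theorem lIGL_soundness_formulas (A : Formula) (x : ℕ)
    (h : InfProof RuleLIK4 ⟨∅, 0, {(x, A)}⟩) :
    ∀ (W : Type) (B : Birel W), Nonempty W → BirelIGL B → ∀ w, bsat B w A := by
  classical
  intro W B _ hIGL w
  obtain ⟨htr, hterm⟩ := hIGL
  by_contra hbw
  obtain ⟨P, hprog⟩ := h
  have hinv0 : SINV B ⟨∅, 0, {(x, A)}⟩ (fun _ => [0]) (fun _ => w) {[0]} := by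
    refine ⟨Set.finite_singleton _, ?_, ?_, ?_, ?_, ?_, ?_, ?_⟩
    · intro p hp; rw [Set.mem_singleton_iff] at hp; subst hp; simp
    · intro p hp hl; rw [Set.mem_singleton_iff] at hp; subst hp; simp at hl
    · intro z; exact Set.mem_singleton _
    · intro q hq; exact absurd hq (Set.notMem_empty q)
    · intro p hp hl; rw [Set.mem_singleton_iff] at hp; subst hp; simp at hl
    · intro q hq; exact absurd hq (Multiset.notMem_zero q)
    · intro q hq
      rw [Multiset.mem_singleton] at hq
      subst hq
      exact hbw
  let d0 : BrNode B P := ⟨[], ⟨∅, 0, {(x, A)}⟩, fun _ => [0], fun _ => w, {[0]}, P.root, hinv0⟩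
  let seq : ℕ → BrNode B P := fun n => Nat.rec d0 (fun _ d => (brstep B htr P d).choose) n
  have hstep : ∀ n, (∃ i, (seq (n+1)).path = (seq n).path ++ [i]) ∧
      ∀ z ∈ (seq n).S.vars, B.le ((seq n).J ((seq n).σ z)) ((seq (n+1)).J ((seq (n+1)).σ z)) :=
    fun n => (brstep B htr P (seq n)).choose_spec
  let f : ℕ → ℕ := fun n => (hstep n).1.choose
  have hpath : ∀ n, (seq n).path = branchPath f n := by
    intro n
    induction n with
    | zero => rfl
    | succ n ih =>
        have h1 : (seq (n+1)).path = (seq n).path ++ [f n] := (hstep n).1.choose_spec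
        rw [h1, ih]
        show branchPath f n ++ [f n] = branchPath f (n+1)
        unfold branchPath
        rw [List.range_succ, List.map_append]
        rfl
  have hSb : ∀ n, P.node (branchPath f n) = some ((seq n).S) := fun n =>
    hpath n ▸ (seq n).hnode
  obtain ⟨k, xt, hx1, hx2, hx3⟩ := hprog f (fun n => (seq n).S) hSb
  let g : ℕ → W := fun n => (seq n).J ((seq n).σ (xt n))
  have hle_step : ∀ i, k ≤ i → ¬((xt i, xt (i+1)) ∈ (seq i).S.rel) →
      B.le (g i) (g (i+1)) := by
    intro i hk hns
    rcases hx2 i hk with he | hrel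
    · show B.le ((seq i).J ((seq i).σ (xt i)))
        ((seq (i+1)).J ((seq (i+1)).σ (xt (i+1))))
      rw [he]
      exact (hstep i).2 (xt i) (hx1 i hk)
    · exact absurd hrel hns
  have hchain : ∀ a b, k ≤ a → a ≤ b →
      (∀ j, a ≤ j → j < b → ¬((xt j, xt (j+1)) ∈ (seq j).S.rel)) → B.le (g a) (g b) := by
    intro a b hka hab
    induction b, hab using Nat.le_induction with
    | base => intro _; exact B.le_refl _
    | succ b hab ih =>
        intro hns
        have h1 := ih (fun j hj hjb => hns j hj (by omega))
        have h2 := hle_step b (by omega) (hns b hab (by omega))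
        exact B.le_trans _ _ _ h1 h2
  have hEx : ∀ n, ∃ i, n ≤ i ∧ (k ≤ i ∧ (xt i, xt (i+1)) ∈ (seq i).S.rel) := by
    intro n
    obtain ⟨i, h1, h2, h3⟩ := hx3 n
    exact ⟨i, h1, h2, h3⟩
  let idx : ℕ → ℕ := fun m => Nat.rec (Nat.find (hEx k)) (fun _ prev => Nat.find (hEx (prev + 1))) m
  have hsp : ∀ m, (k ≤ idx m) ∧ (xt (idx m), xt (idx m + 1)) ∈ ((seq (idx m)).S).rel := by
    intro m
    cases m with
    | zero => exact (Nat.find_spec (hEx k)).2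
    | succ m => exact (Nat.find_spec (hEx (idx m + 1))).2
  have hlt : ∀ m, idx m + 1 ≤ idx (m+1) := fun m => (Nat.find_spec (hEx (idx m + 1))).1
  have hmin : ∀ m j, idx m < j → j < idx (m+1) →
      ¬((xt j, xt (j+1)) ∈ ((seq j).S).rel) := by
    intro m j h1 h2 hrel
    have hkj : k ≤ j := le_trans (hsp m).1 (le_of_lt h1)
    exact Nat.find_min (hEx (idx m + 1)) h2 ⟨h1, hkj, hrel⟩
  have hacc_sp : ∀ i, (xt i, xt (i+1)) ∈ ((seq i).S).rel →
      B.acc (g i) ((seq i).J ((seq i).σ (xt (i+1)))) := fun i hrel =>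
    (seq i).hinv.interp htr hrel
  have hle_sp : ∀ i, k ≤ i → (xt i, xt (i+1)) ∈ ((seq i).S).rel →
      B.le ((seq i).J ((seq i).σ (xt (i+1)))) (g (i+1)) := fun i hk hrel =>
    (hstep i).2 (xt (i+1)) (mem_vars_rel_r hrel)
  refine hterm ⟨fun m => (seq (idx m)).J ((seq (idx m)).σ (xt (idx m + 1))), ?_⟩
  intro m
  refine ⟨g (idx (m+1)), ?_, ?_⟩
  · have h1 := hle_sp (idx m) (hsp m).1 (hsp m).2
    have h2 := hchain (idx m + 1) (idx (m+1)) (by have := (hsp m).1; omega) (hlt m)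
      (fun j hj hjb => hmin m j (by omega) hjb)
    exact B.le_trans _ _ _ h1 h2
  · exact hacc_sp (idx (m+1)) (hsp (m+1)).2

end IGL
end

section
/- (From birelational validity to predicate validity.) If birel-IGL ⊨ A (i.e. A is satisfied at every world of every birelational model with transitive accessibility relation and terminating composite ≤;R), then pred-IGL ⊨ A (i.e. K, w ⊨^ρ ⟨A⟩ₓ for every Kripke structure K in pred-IGL, every world w, every w-environment ρ, and any variable x). -/
namespace IGL

/-- The birelational model induced by a Kripke structure, on worlds `(w, d)`
with `d ∈ D_w`. -/
def toBirel {W D : Type} (K : Kripke W D) : Birel {p : W × D // p.2 ∈ K.Dom p.1} where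
  le u v := K.le u.1.1 v.1.1 ∧ u.1.2 = v.1.2
  le_refl u := ⟨K.le_refl _, rfl⟩
  le_trans u v w h1 h2 := ⟨K.le_trans _ _ _ h1.1 h2.1, h1.2.trans h2.2⟩
  le_antisymm u v h1 h2 := by
    apply Subtype.ext
    exact Prod.ext (K.le_antisymm _ _ h1.1 h2.1) h1.2
  acc u v := u.1.1 = v.1.1 ∧ K.Rel u.1.1 u.1.2 v.1.2
  F1 := by
    rintro ⟨⟨w, d⟩, hd⟩ ⟨⟨w', d'⟩, hd'⟩ ⟨⟨u, e⟩, he⟩ ⟨hle, hde⟩ ⟨hw, hr⟩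
    dsimp at hle hde hw hr
    subst hde; subst hw
    refine ⟨⟨(w', e), K.Dom_mono _ _ hle he⟩, ⟨hle, rfl⟩, rfl, ?_⟩
    exact K.Rel_mono _ _ _ _ hle hr
  F2 := by
    rintro ⟨⟨w, d⟩, hd⟩ ⟨⟨u, e⟩, he⟩ ⟨⟨u', e'⟩, he'⟩ ⟨hw, hr⟩ ⟨hle, hee⟩
    dsimp at hw hr hle hee
    subst hw; subst hee
    refine ⟨⟨(u', d), K.Dom_mono _ _ hle hd⟩, ⟨hle, rfl⟩, rfl, ?_⟩
    exact K.Rel_mono _ _ _ _ hle hr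
  val u p := u.1.2 ∈ K.Pr u.1.1 p
  val_mono := by
    rintro ⟨⟨w, d⟩, hd⟩ ⟨⟨w', d'⟩, hd'⟩ ⟨hle, hde⟩ p hp
    dsimp at hle hde ⊢
    subst hde
    exact K.Pr_mono _ _ _ hle hp

lemma bsat_toBirel {W D : Type} (K : Kripke W D) (A : Formula) :
    ∀ (u : {p : W × D // p.2 ∈ K.Dom p.1}),
      bsat (toBirel K) u A ↔ ksat K u.1.1 u.1.2 A := by
  induction A with
  | atom p => intro u; exact Iff.rfl
  | bot => intro u; exact Iff.rfl
  | and A B ihA ihB =>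
      intro u
      exact and_congr (ihA u) (ihB u)
  | or A B ihA ihB =>
      intro u
      exact or_congr (ihA u) (ihB u)
  | imp A B ihA ihB =>
      rintro ⟨⟨w, d⟩, hd⟩
      constructor
      · intro h w' hle hA
        have hd' : d ∈ K.Dom w' := K.Dom_mono _ _ hle hd
        have := h ⟨(w', d), hd'⟩ ⟨hle, rfl⟩ ((ihA _).mpr hA)
        exact (ihB _).mp this
      · rintro h ⟨⟨w', d'⟩, hd'⟩ ⟨hle, hde⟩ hA
        dsimp at hle hde
        subst hde
        exact (ihB _).mpr (h w' hle ((ihA _).mp hA))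
  | box A ihA =>
      rintro ⟨⟨w, d⟩, hd⟩
      constructor
      · intro h w' e hle hr
        have he : e ∈ K.Dom w' := (K.Rel_dom _ _ _ hr).2
        have hd' : d ∈ K.Dom w' := K.Dom_mono _ _ hle hd
        have := h ⟨(w', d), hd'⟩ ⟨(w', e), he⟩ ⟨hle, rfl⟩ ⟨rfl, hr⟩
        exact (ihA _).mp this
      · rintro h ⟨⟨w', d'⟩, hd'⟩ ⟨⟨u, e⟩, he⟩ ⟨hle, hde⟩ ⟨hw, hr⟩
        dsimp at hle hde hw hr
        subst hde; subst hw
        exact (ihA _).mpr (h w' e hle hr)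
  | dia A ihA =>
      rintro ⟨⟨w, d⟩, hd⟩
      constructor
      · rintro ⟨⟨⟨u, e⟩, he⟩, ⟨hw, hr⟩, hA⟩
        dsimp at hw hr
        subst hw
        exact ⟨e, hr, (ihA _).mp hA⟩
      · rintro ⟨e, hr, hA⟩
        exact ⟨⟨(w, e), (K.Rel_dom _ _ _ hr).2⟩, ⟨rfl, hr⟩, (ihA _).mpr hA⟩

lemma toBirel_IGL {W D : Type} (K : Kripke W D) (hK : PredIGL K) :
    BirelIGL (toBirel K) := by
  constructor
  · rintro ⟨⟨w, d⟩, hd⟩ ⟨⟨u, e⟩, he⟩ ⟨⟨u', e'⟩, he'⟩ ⟨hw, hr⟩ ⟨hw', hr'⟩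
    dsimp at hw hr hw' hr'
    subst hw; subst hw'
    exact ⟨rfl, hK.1 _ hr hr'⟩
  · rintro ⟨f, hf⟩
    apply hK.2
    refine ⟨fun n => (f n).1.1, fun n => (f n).1.2, fun n => ?_⟩
    obtain ⟨m, ⟨hle, heq⟩, hw, hr⟩ := hf n
    refine ⟨(f n).2, ?_, ?_⟩
    · simp only []; rw [← hw]; exact hle
    · simp only []; rw [← hw]; rw [← heq] at hr; exact hr

/-- **From birelational validity to predicate validity.** If `A` holds at every
world of every birel-IGL model then the standard translation of `A` holds in
every Kripke structure of pred-IGL, at every world, under every environment. -/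
theorem birel_to_pred (A : Formula) :
    (∀ (W : Type) (B : Birel W), Nonempty W → BirelIGL B → ∀ w, bsat B w A) →
    ∀ (W D : Type) (K : Kripke W D), Nonempty W → PredIGL K →
      ∀ (w : W) (ρ : ℕ → D), (∀ v, ρ v ∈ K.Dom w) → ∀ x : ℕ, ksat K w (ρ x) A := by
  intro h W D K _ hK w ρ hρ x
  have hw : ρ x ∈ K.Dom w := hρ x
  have := h _ (toBirel K) ⟨⟨(w, ρ x), hw⟩⟩ (toBirel_IGL K hK) ⟨(w, ρ x), hw⟩
  exact (bsat_toBirel K A _).mp this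

end IGL
end

section
/- (Invertibility of ∨-left for ∞-proofs.) If there is an ∞-proof in ℓIK4 of the sequent R, Γ, x:A₀∨A₁ ⇒ φ (with a single formula φ on the right), then for each i ∈ {0,1} there is an ∞-proof in ℓIK4 of R, Γ, x:Aᵢ ⇒ φ, obtained by replacing x:A₀∨A₁ and all its direct ancestors by x:Aᵢ and, at each step where it is principal, taking the i-th premiss. -/
namespace IGL

/-! ### Auxiliary lemmas for invertibility -/

lemma mLabels_finite (Γ : Multiset LFormula) : (mLabels Γ).Finite := by
  apply Set.Finite.subset (Γ.finite_toSet.image Prod.fst)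
  rintro z ⟨A, hA⟩
  exact ⟨(z, A), hA, rfl⟩

lemma relVars_finite {R : Set (ℕ × ℕ)} (hR : R.Finite) : (relVars R).Finite := by
  apply Set.Finite.subset ((hR.image Prod.fst).union (hR.image Prod.snd))
  rintro z ⟨w, h | h⟩
  · exact Or.inl ⟨(z, w), h, rfl⟩
  · exact Or.inr ⟨(w, z), h, rfl⟩

lemma exists_fresh (S : Sequent) (hR : S.rel.Finite) : ∃ y, Fresh y S := by
  have hfin : S.vars.Finite :=
    ((relVars_finite hR).union (mLabels_finite S.left)).union (mLabels_finite S.right)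
  obtain ⟨y, hy⟩ := hfin.infinite_compl.nonempty
  exact ⟨y, hy⟩

/-- Node function obtained by gluing chosen preproofs of the premisses below a
rule instance. -/
private def glueNode (rule : Sequent → List Sequent → Prop) (S : Sequent)
    (prems : List Sequent)
    (P : ∀ i (h : i < prems.length), Preproof rule (prems[i]'h)) :
    List ℕ → Option Sequent
  | [] => some S
  | i :: p => if h : i < prems.length then (P i h).node p else none

lemma branchPath_zero (f : ℕ → ℕ) : branchPath f 0 = [] := rfl

lemma branchPath_succ (f : ℕ → ℕ) (n : ℕ) :
    branchPath f (n + 1) = f 0 :: branchPath (fun k => f (k + 1)) n := by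
  simp [branchPath, List.range_succ_eq_map, List.map_map, Function.comp]

lemma progressing_shift (Sb : ℕ → Sequent)
    (h : Progressing (fun n => Sb (n + 1))) : Progressing Sb := by
  obtain ⟨k, x, h1, h2, h3⟩ := h
  refine ⟨k + 1, fun i => x (i - 1), ?_, ?_, ?_⟩
  · intro i hi
    have h' := h1 (i - 1) (by omega)
    simpa [Nat.sub_add_cancel (by omega : 1 ≤ i)] using h'
  · intro i hi
    have h' := h2 (i - 1) (by omega)
    simpa [Nat.sub_add_cancel (by omega : 1 ≤ i), Nat.add_sub_cancel] using h'
  · intro n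
    obtain ⟨i, hni, hki, hrel⟩ := h3 n
    refine ⟨i + 1, by omega, by omega, ?_⟩
    simpa [Nat.add_sub_cancel] using hrel

/-- Gluing ∞-proofs of the premisses of a rule instance into an ∞-proof of the
conclusion. -/
lemma infProof_glue (rule : Sequent → List Sequent → Prop) (S : Sequent)
    (prems : List Sequent) (hr : rule S prems)
    (hp : ∀ S' ∈ prems, InfProof rule S') : InfProof rule S := by
  have hP : ∀ i (h : i < prems.length), ∃ P : Preproof rule (prems[i]'h),
      ∀ (f : ℕ → ℕ) (Sb : ℕ → Sequent),
        (∀ n, P.node (branchPath f n) = some (Sb n)) → Progressing Sb :=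
    fun i h => hp _ (List.getElem_mem h)
  choose P hPspec using hP
  refine ⟨⟨glueNode rule S prems P, rfl, ?_⟩, ?_⟩
  · intro p S' hps
    match p with
    | [] =>
      simp only [glueNode, Option.some.injEq] at hps
      subst hps
      refine ⟨prems, hr, ?_⟩
      intro i
      by_cases h : i < prems.length
      · simp [glueNode, h, (P i h).root, List.getElem?_eq_getElem h]
      · simp [glueNode, h, List.getElem?_eq_none (Nat.le_of_not_lt h)]
    | i :: q =>
      simp only [glueNode] at hps
      split at hps
      · rename_i h
        obtain ⟨prems', hr', hch⟩ := (P i h).children q S' hps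
        refine ⟨prems', hr', ?_⟩
        intro j
        have : (i :: q) ++ [j] = i :: (q ++ [j]) := rfl
        rw [this]
        simp only [glueNode, dif_pos h]
        exact hch j
      · exact absurd hps (by simp)
  · intro f Sb hSb
    have h1 := hSb 1
    rw [branchPath_succ, branchPath_zero] at h1
    simp only [glueNode] at h1
    split at h1
    · rename_i h
      apply progressing_shift
      apply hPspec (f 0) h (fun k => f (k + 1))
      intro n
      have hn := hSb (n + 1)
      rw [branchPath_succ] at hn
      simpa [glueNode, h] using hn
    · exact absurd h1 (by simp)

lemma deriv_toInf {rule : Sequent → List Sequent → Prop} {S : Sequent}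
    (h : Deriv rule S) : InfProof rule S := by
  induction h with
  | step S prems hr _ ih => exact infProof_glue rule S prems hr ih

lemma lik4_step {S : Sequent} {ps : List Sequent} (hr : Rule true true false S ps)
    (h1 : SingleRHS S) (h2 : ∀ p ∈ ps, SingleRHS p)
    (hs : ∀ p ∈ ps, Deriv RuleLIK4 p) : Deriv RuleLIK4 S :=
  Deriv.step S ps ⟨hr, h1, h2⟩ hs

lemma singleRHS_cons (R : Set (ℕ × ℕ)) (Γ : Multiset LFormula) (q : LFormula) :
    SingleRHS ⟨R, Γ, {q}⟩ := by simp [SingleRHS]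

/-- The identity sequent `x:A ⇒ x:A` is finitely derivable in ℓIK4, for any
finite set of relational atoms. -/
lemma ident : ∀ (A : Formula) (R : Set (ℕ × ℕ)) (x : ℕ), R.Finite →
    Deriv RuleLIK4 ⟨R, {(x, A)}, {(x, A)}⟩ := by
  intro A
  induction A with
  | atom p =>
    intro R x _
    exact lik4_step (Rule.id R x p) (singleRHS_cons _ _ _) (by simp) (by simp)
  | bot =>
    intro R x _
    exact lik4_step (Rule.botL R 0 {(x, Formula.bot)} x) (singleRHS_cons _ _ _)
      (by simp) (by simp)
  | and A B ihA ihB =>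
    intro R x hR
    refine lik4_step (Rule.andR R {(x, Formula.and A B)} 0 x A B)
      (singleRHS_cons _ _ _) ?_ ?_
    · intro p hp
      rcases List.mem_pair.mp hp with rfl | rfl <;> exact singleRHS_cons _ _ _
    · intro p hp
      rcases List.mem_pair.mp hp with rfl | rfl
      · refine lik4_step (Rule.andL₁ R 0 {(x, A)} x A B) (singleRHS_cons _ _ _)
          (by intro q hq; rcases List.mem_singleton.mp hq with rfl
              exact singleRHS_cons _ _ _) ?_
        intro q hq; rcases List.mem_singleton.mp hq with rfl
        exact ihA R x hR
      · refine lik4_step (Rule.andL₂ R 0 {(x, B)} x A B) (singleRHS_cons _ _ _)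
          (by intro q hq; rcases List.mem_singleton.mp hq with rfl
              exact singleRHS_cons _ _ _) ?_
        intro q hq; rcases List.mem_singleton.mp hq with rfl
        exact ihB R x hR
  | or A B ihA ihB =>
    intro R x hR
    refine lik4_step (Rule.orL R 0 {(x, Formula.or A B)} x A B)
      (singleRHS_cons _ _ _) ?_ ?_
    · intro p hp
      rcases List.mem_pair.mp hp with rfl | rfl <;> exact singleRHS_cons _ _ _
    · intro p hp
      rcases List.mem_pair.mp hp with rfl | rfl
      · refine lik4_step (Rule.orR₁ R {(x, A)} 0 x A B) (singleRHS_cons _ _ _)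
          (by intro q hq; rcases List.mem_singleton.mp hq with rfl
              exact singleRHS_cons _ _ _) ?_
        intro q hq; rcases List.mem_singleton.mp hq with rfl
        exact ihA R x hR
      · refine lik4_step (Rule.orR₂ R {(x, B)} 0 x A B) (singleRHS_cons _ _ _)
          (by intro q hq; rcases List.mem_singleton.mp hq with rfl
              exact singleRHS_cons _ _ _) ?_
        intro q hq; rcases List.mem_singleton.mp hq with rfl
        exact ihB R x hR
  | imp A B ihA ihB =>
    intro R x hR
    refine lik4_step (Rule.impR R {(x, Formula.imp A B)} 0 x A B (by simp))
      (singleRHS_cons _ _ _) ?_ ?_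
    · intro p hp; rcases List.mem_singleton.mp hp with rfl
      exact singleRHS_cons _ _ _
    · intro p hp; rcases List.mem_singleton.mp hp with rfl
      have e : ((x, A) ::ₘ ({(x, Formula.imp A B)} : Multiset LFormula))
          = (x, Formula.imp A B) ::ₘ ({(x, A)} + 0) := by
        rw [add_zero]
        exact Multiset.cons_swap _ _ 0
      have e2 : ((x, B) ::ₘ (0 : Multiset LFormula)) = 0 + {(x, B)} := by
        simp
      rw [show (⟨R, (x, A) ::ₘ {(x, Formula.imp A B)}, (x, B) ::ₘ 0⟩ : Sequent)
          = ⟨R, (x, Formula.imp A B) ::ₘ ({(x, A)} + 0), 0 + {(x, B)}⟩ from by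
        rw [e, e2]]
      refine lik4_step (Rule.impL R {(x, A)} 0 0 {(x, B)} x A B) ?_ ?_ ?_
      · show Multiset.card (0 + ({(x, B)} : Multiset LFormula)) = 1; simp
      · intro q hq
        rcases List.mem_pair.mp hq with rfl | rfl <;> exact singleRHS_cons _ _ _
      · intro q hq
        rcases List.mem_pair.mp hq with rfl | rfl
        · exact ihA R x hR
        · exact ihB R x hR
  | box A ihA =>
    intro R x hR
    obtain ⟨y, hy⟩ := exists_fresh ⟨R, {(x, Formula.box A)}, {(x, Formula.box A)}⟩ hR
    refine lik4_step (Rule.boxR R {(x, Formula.box A)} 0 x y A (by simp) hy)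
      (singleRHS_cons _ _ _) ?_ ?_
    · intro p hp; rcases List.mem_singleton.mp hp with rfl
      exact singleRHS_cons _ _ _
    · intro p hp; rcases List.mem_singleton.mp hp with rfl
      refine lik4_step (Rule.boxL (insert (x, y) R) 0 {(y, A)} x y A
        (Set.mem_insert _ _)) (singleRHS_cons _ _ _) ?_ ?_
      · intro q hq; rcases List.mem_singleton.mp hq with rfl
        exact singleRHS_cons _ _ _
      · intro q hq; rcases List.mem_singleton.mp hq with rfl
        exact ihA (insert (x, y) R) y (hR.insert _)
  | dia A ihA =>
    intro R x hR
    obtain ⟨y, hy⟩ := exists_fresh ⟨R, {(x, Formula.dia A)}, {(x, Formula.dia A)}⟩ hR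
    refine lik4_step (Rule.diaL R 0 {(x, Formula.dia A)} x y A hy)
      (singleRHS_cons _ _ _) ?_ ?_
    · intro p hp; rcases List.mem_singleton.mp hp with rfl
      exact singleRHS_cons _ _ _
    · intro p hp; rcases List.mem_singleton.mp hp with rfl
      refine lik4_step (Rule.diaR (insert (x, y) R) {(y, A)} 0 x y A
        (Set.mem_insert _ _)) (singleRHS_cons _ _ _) ?_ ?_
      · intro q hq; rcases List.mem_singleton.mp hq with rfl
        exact singleRHS_cons _ _ _
      · intro q hq; rcases List.mem_singleton.mp hq with rfl
        exact ihA (insert (x, y) R) y (hR.insert _)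

/-- `x:Aᵢ ⇒ x:A₀∨A₁` is derivable over any set of relational atoms. -/
lemma orR_side (R : Set (ℕ × ℕ)) (x : ℕ) (A₀ A₁ B : Formula)
    (hB : B = A₀ ∨ B = A₁) :
    Deriv RuleLIK4 ⟨R, {(x, B)}, {(x, Formula.or A₀ A₁)}⟩ := by
  have base : Deriv RuleLIK4 ⟨∅, {(x, B)}, {(x, Formula.or A₀ A₁)}⟩ := by
    rcases hB with rfl | rfl
    · refine lik4_step (Rule.orR₁ ∅ {(x, B)} 0 x B A₁) (singleRHS_cons _ _ _) ?_ ?_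
      · intro q hq; rcases List.mem_singleton.mp hq with rfl
        exact singleRHS_cons _ _ _
      · intro q hq; rcases List.mem_singleton.mp hq with rfl
        exact ident B ∅ x (Set.finite_empty)
    · refine lik4_step (Rule.orR₂ ∅ {(x, B)} 0 x A₀ B) (singleRHS_cons _ _ _) ?_ ?_
      · intro q hq; rcases List.mem_singleton.mp hq with rfl
        exact singleRHS_cons _ _ _
      · intro q hq; rcases List.mem_singleton.mp hq with rfl
        exact ident B ∅ x (Set.finite_empty)
  rw [show (⟨R, {(x, B)}, {(x, Formula.or A₀ A₁)}⟩ : Sequent)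
      = ⟨∅ ∪ R, {(x, B)}, {(x, Formula.or A₀ A₁)}⟩ from by rw [Set.empty_union]]
  refine lik4_step (Rule.th ∅ R {(x, B)} {(x, Formula.or A₀ A₁)} rfl)
    (singleRHS_cons _ _ _) ?_ ?_
  · intro q hq; rcases List.mem_singleton.mp hq with rfl
    exact singleRHS_cons _ _ _
  · intro q hq; rcases List.mem_singleton.mp hq with rfl
    exact base


/-- **Invertibility of ∨-left for ∞-proofs.** If `R, Γ, x:A₀∨A₁ ⇒ φ` has an
∞-proof in ℓIK4, then so do `R, Γ, x:A₀ ⇒ φ` and `R, Γ, x:A₁ ⇒ φ`. -/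
theorem orL_invertible (R : Set (ℕ × ℕ)) (Γ : Multiset LFormula) (x : ℕ)
    (A₀ A₁ : Formula) (φ : LFormula)
    (h : InfProof RuleLIK4 ⟨R, (x, Formula.or A₀ A₁) ::ₘ Γ, {φ}⟩) :
    InfProof RuleLIK4 ⟨R, (x, A₀) ::ₘ Γ, {φ}⟩ ∧
    InfProof RuleLIK4 ⟨R, (x, A₁) ::ₘ Γ, {φ}⟩ := by
  have main : ∀ B, B = A₀ ∨ B = A₁ → InfProof RuleLIK4 ⟨R, (x, B) ::ₘ Γ, {φ}⟩ := by
    intro B hB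
    rw [show (⟨R, (x, B) ::ₘ Γ, {φ}⟩ : Sequent)
        = ⟨R, {(x, B)} + Γ, 0 + {φ}⟩ from by rw [Multiset.singleton_add, zero_add]]
    apply infProof_glue RuleLIK4 _
      [⟨R, {(x, B)}, (x, Formula.or A₀ A₁) ::ₘ 0⟩,
       ⟨R, (x, Formula.or A₀ A₁) ::ₘ Γ, {φ}⟩]
    · refine ⟨Rule.cut R {(x, B)} Γ 0 {φ} x (Formula.or A₀ A₁), ?_, ?_⟩
      · show Multiset.card ((0 : Multiset LFormula) + {φ}) = 1; simp
      · intro q hq; rcases List.mem_pair.mp hq with rfl | rfl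
        · exact singleRHS_cons _ _ _
        · exact singleRHS_cons _ _ _
    · intro S' hS'; rcases List.mem_pair.mp hS' with rfl | rfl
      · exact deriv_toInf (orR_side R x A₀ A₁ B hB)
      · exact h
  exact ⟨main A₀ (Or.inl rfl), main A₁ (Or.inr rfl)⟩


end IGL
end
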